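/- Let U ⊆ ℝ³ be open, let α > 0, and let θ : U → ℝ³ be twice continuously differentiable such that ζ(x) = x + θ(x) has everywhere invertible Jacobian Dζ with 𝒥 = det Dζ > 0; set 𝒜 = [Dζ]^{-1}. Let 𝒟 be any one of the first-order operators ∂_i (i = 1,2,3), Λ, or ∂̸_{jk} (j,k ∈ {1,2,3}). Then for each k, i ∈ {1,2,3}, on U: 𝒟( 𝒥^{-1/α} 𝒜^k_i ) = − 𝒥^{-1/α} 𝒜^k_j [∇_ζ(𝒟θ)]^i_j − (1/α) 𝒥^{-1/α} 𝒜^k_i div_ζ(𝒟θ) − 𝒥^{-1/α} 𝒜^k_j [Curl_ζ(𝒟θ)]^j_i − ( 𝒥^{-1/α} 𝒜^k_j 𝒜^s_i [𝒟, ∂_s] θ^j + (1/α) 𝒥^{-1/α} 𝒜^k_i 𝒜^s_j [𝒟, ∂_s] θ^j ), where [𝒟, ∂_s] θ^j = 𝒟(∂_s θ^j) − ∂_s(𝒟 θ^j) and repeated indices j, s are summed from 1 to 3. -/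

import Mathlib

/-- Partial derivative `∂_j f` of a scalar function on `ℝ³` (as an operator). -/
noncomputable def pdF (j : Fin 3) (f : (Fin 3 → ℝ) → ℝ) : (Fin 3 → ℝ) → ℝ :=
  fun x => fderiv ℝ f x (Pi.single j 1)

/-- Angular derivative `∂̸_ij = x_i ∂_j − x_j ∂_i`. -/
noncomputable def angF (i j : Fin 3) (f : (Fin 3 → ℝ) → ℝ) : (Fin 3 → ℝ) → ℝ :=
  fun x => x i * pdF j f x - x j * pdF i f x

/-- Radial derivative `Λ = x₁∂₁ + x₂∂₂ + x₃∂₃`. -/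
noncomputable def radF (f : (Fin 3 → ℝ) → ℝ) : (Fin 3 → ℝ) → ℝ :=
  fun x => ∑ l : Fin 3, x l * pdF l f x

/-- Jacobian matrix `Dζ`, entries `[Dζ]^i_j = ∂_j ζ^i`. -/
noncomputable def jacM (ζ : (Fin 3 → ℝ) → (Fin 3 → ℝ)) (x : Fin 3 → ℝ) :
    Matrix (Fin 3) (Fin 3) ℝ :=
  Matrix.of fun i j => pdF j (fun y => ζ y i) x


/-!
Each admissible `𝒟` is the derivative along a vector field `v`, `𝒟f(x) = Df(x) v(x)`, so it obeys
the chain rule. Writing `G = 𝒟(Dζ)`, Jacobi's formula `𝒟𝒥 = 𝒥 tr(𝒜G)` and `𝒟𝒜 = -𝒜G𝒜` give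
`𝒟(𝒥^{-1/α}𝒜) = -𝒥^{-1/α}(𝒜G𝒜 + (1/α) tr(𝒜G) 𝒜)`. As `Dζ = I + Dθ`,
`G^j_s = 𝒟∂_sθ^j = ∂_s𝒟θ^j + [𝒟, ∂_s]θ^j`, and the right-hand side regroups accordingly: the
`∇_ζ` and `Curl_ζ` terms add up to the `∂_s𝒟θ` part of `𝒜G𝒜`, the `div_ζ` term is the
`∂_s𝒟θ` part of `tr(𝒜G)`, and the commutator terms supply the rest.
-/

open Matrix

section MatrixCalculus

variable {𝕜 E n : Type*} [NontriviallyNormedField 𝕜] [NormedAddCommGroup E] [NormedSpace 𝕜 E]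
  [Fintype n] [DecidableEq n] {M : E → Matrix n n 𝕜} {M' : n → n → E →L[𝕜] 𝕜} {x : E}

theorem Matrix.sum_det_updateCol_eq_trace_adjugate_mul {R : Type*} [CommRing R]
    (A B : Matrix n n R) : ∑ i, (A.updateCol i fun a => B a i).det = trace (A.adjugate * B) :=
  Finset.sum_congr rfl fun i _ => by rw [← cramer_apply, cramer_eq_adjugate_mulVec]; rfl

theorem HasFDerivAt.matrix_det (h : ∀ i j, HasFDerivAt (fun y => M y i j) (M' i j) x) :
    HasFDerivAt (fun y => (M y).det) (∑ i, ∑ j, (M x).adjugate i j • M' j i) x := by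
  simp_rw [det_apply']
  refine (HasFDerivAt.fun_sum fun σ _ =>
    (HasFDerivAt.finsetProd fun i _ => h (σ i) i).const_mul _).congr_fderiv ?_
  ext w
  have hcol := sum_det_updateCol_eq_trace_adjugate_mul (M x) (of fun a b => M' a b w)
  simp only [det_apply', updateCol_apply, of_apply, trace, diag_apply, Matrix.mul_apply] at hcol
  simp only [_root_.sum_apply, _root_.smul_apply, smul_eq_mul, ← hcol, Finset.mul_sum]
  rw [Finset.sum_comm]
  refine Finset.sum_congr rfl fun i _ => Finset.sum_congr rfl fun σ _ => ?_
  rw [← Finset.mul_prod_erase _ _ (Finset.mem_univ i), if_pos rfl,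
    Finset.prod_congr rfl fun j hj => if_neg (Finset.ne_of_mem_erase hj)]
  ring

theorem HasFDerivAt.matrix_det_updateRow (h : ∀ i j, HasFDerivAt (fun y => M y i j) (M' i j) x)
    (r : n) (c : n → 𝕜) :
    HasFDerivAt (fun y => ((M y).updateRow r c).det)
      (∑ i, ∑ j, ((M x).updateRow r c).adjugate i j • (if j = r then 0 else M' j i)) x := by
  refine HasFDerivAt.matrix_det (M := fun y => (M y).updateRow r c) fun i j => ?_
  simp only [updateRow_apply]
  split_ifs
  · exact hasFDerivAt_const _ _
  · exact h i j

theorem DifferentiableAt.matrix_inv_apply (h : ∀ i j, HasFDerivAt (fun y => M y i j) (M' i j) x)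
    (hM : (M x).det ≠ 0) (k i : n) : DifferentiableAt 𝕜 (fun y => (M y)⁻¹ k i) x := by
  simp only [Matrix.inv_def, Ring.inverse_eq_inv', Matrix.smul_apply, smul_eq_mul, adjugate_apply]
  exact ((HasFDerivAt.matrix_det h).differentiableAt.inv hM).mul
    (HasFDerivAt.matrix_det_updateRow h i _).differentiableAt

theorem HasFDerivAt.matrix_inv_apply (h : ∀ i j, HasFDerivAt (fun y => M y i j) (M' i j) x)
    (hM : (M x).det ≠ 0) (k i : n) :
    HasFDerivAt (fun y => (M y)⁻¹ k i)
      (-∑ a, ∑ b, ((M x)⁻¹ k a * (M x)⁻¹ b i) • M' a b) x := by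
  set N' := fun k i => fderiv 𝕜 (fun y => (M y)⁻¹ k i) x
  have hN : ∀ k i, HasFDerivAt (fun y => (M y)⁻¹ k i) (N' k i) x := fun k i =>
    (DifferentiableAt.matrix_inv_apply h hM k i).hasFDerivAt
  -- differentiate `M⁻¹ * M = 1`, which holds near `x`
  have hprod :
      ∀ w, (M x)⁻¹ * of (fun a b => M' a b w) + of (fun a b => N' a b w) * M x = 0 := by
    intro w
    ext k i
    have hd : HasFDerivAt (fun y => ((M y)⁻¹ * M y) k i)
        (∑ b, ((M x)⁻¹ k b • M' b i + M x b i • N' k b)) x := by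
      simp only [Matrix.mul_apply]
      exact HasFDerivAt.fun_sum fun b _ => (hN k b).mul (h b i)
    have hone : ∀ᶠ y in nhds x, ((M y)⁻¹ * M y) k i = (1 : Matrix n n 𝕜) k i := by
      filter_upwards [(HasFDerivAt.matrix_det h).continuousAt.eventually_ne hM] with y hy
      rw [nonsing_inv_mul _ (isUnit_iff_ne_zero.mpr hy)]
    have hzero := congrArg (· w) (hd.unique ((hasFDerivAt_const _ x).congr_of_eventuallyEq hone))
    simpa [Matrix.mul_apply, Finset.sum_add_distrib, mul_comm] using hzero
  refine (hN k i).congr_fderiv (ContinuousLinearMap.ext fun w => ?_)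
  have hsolve : of (fun a b => N' a b w) = -((M x)⁻¹ * of (fun a b => M' a b w) * (M x)⁻¹) :=
    calc _ = of (fun a b => N' a b w) * (M x * (M x)⁻¹) := by
          rw [mul_nonsing_inv _ (isUnit_iff_ne_zero.mpr hM), Matrix.mul_one]
      _ = _ := by rw [← Matrix.mul_assoc, eq_neg_of_add_eq_zero_right (hprod w), Matrix.neg_mul]
  have hki := congrFun (congrFun hsolve k) i
  simp only [of_apply, Matrix.neg_apply, Matrix.mul_apply, Finset.sum_mul] at hki
  simp only [hki, _root_.neg_apply, _root_.sum_apply, _root_.smul_apply, smul_eq_mul]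
  rw [Finset.sum_comm]
  exact congrArg _
    (Finset.sum_congr rfl fun a _ => Finset.sum_congr rfl fun b _ => mul_right_comm _ _ _)

end MatrixCalculus

theorem fderiv_det_rpow_mul_inv_apply {E n : Type*} [NormedAddCommGroup E] [NormedSpace ℝ E]
    [Fintype n] [DecidableEq n] {M : E → Matrix n n ℝ} {M' : n → n → E →L[ℝ] ℝ} {x : E}
    (h : ∀ i j, HasFDerivAt (fun y => M y i j) (M' i j) x)
    (hpos : 0 < (M x).det) (p : ℝ) (k i : n) (w : E) :
    fderiv ℝ (fun y => (M y).det ^ p * (M y)⁻¹ k i) x w =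
      -((M x).det ^ p * ((M x)⁻¹ * of (fun a b => M' a b w) * (M x)⁻¹) k i)
        + p * (M x).det ^ p * (M x)⁻¹ k i * trace ((M x)⁻¹ * of fun a b => M' a b w) := by
  have hadj : (M x).adjugate = (M x).det • (M x)⁻¹ := by
    rw [Matrix.inv_def, Ring.inverse_eq_inv', smul_smul, mul_inv_cancel₀ hpos.ne', one_smul]
  rw [(((HasFDerivAt.matrix_det h).rpow_const (Or.inl hpos.ne') (p := p)).fun_mul
    (HasFDerivAt.matrix_inv_apply h hpos.ne' k i)).fderiv]
  simp only [hadj, _root_.add_apply, _root_.smul_apply, _root_.neg_apply, _root_.sum_apply,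
    smul_eq_mul, Matrix.smul_apply, trace, diag_apply, Matrix.mul_apply, of_apply]
  set A := (M x)⁻¹
  set g := fun a b => M' a b w
  have htr : ∑ a, ∑ b, (M x).det * A a b * g b a = (M x).det * ∑ a, ∑ b, A a b * g b a := by
    simp only [Finset.mul_sum, mul_assoc]
  have hAGA : ∑ b, (∑ a, A k a * g a b) * A b i = ∑ a, ∑ b, A k a * A b i * g a b := by
    simp only [Finset.sum_mul]
    rw [Finset.sum_comm]
    exact Finset.sum_congr rfl fun a _ => Finset.sum_congr rfl fun b _ => by ring
  rw [htr, hAGA, Real.rpow_sub_one hpos.ne']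
  field_simp
  ring

theorem Matrix.linearisation_rhs_telescope {R n : Type*} [CommRing R] [Fintype n]
    (A G H : Matrix n n R) (t c : R) (k i : n) :
    -(t * ∑ j, A k j * ∑ s, A s j * H i s)
      - c * t * A k i * (∑ r, ∑ s, A s r * H r s)
      - (t * ∑ j, A k j * ∑ s, (A s i * H j s - A s j * H i s))
      - ((t * ∑ j, ∑ s, A k j * A s i * (G j s - H j s))
        + c * t * A k i * ∑ j, ∑ s, A s j * (G j s - H j s))
    = -(t * (A * G * A) k i) - c * t * A k i * trace (A * G) := by
  simp only [Matrix.mul_apply, trace, diag_apply, mul_sub, Finset.sum_sub_distrib, Finset.mul_sum,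
    Finset.sum_mul, mul_assoc]
  rw [Finset.sum_comm (f := fun s j => t * (A k j * (G j s * A s i))),
    Finset.sum_comm (f := fun s j => c * (t * (A k i * (A s j * G j s))))]
  ring_nf
  ac_nf
  ring

theorem pdF_apply_of_differentiableAt {θ : (Fin 3 → ℝ) → (Fin 3 → ℝ)} {y : Fin 3 → ℝ}
    (hθ : DifferentiableAt ℝ θ y) (j s : Fin 3) :
    pdF s (fun z => θ z j) y = fderiv ℝ θ y (Pi.single s 1) j := by
  simp only [pdF, fderiv_apply hθ j, ContinuousLinearMap.comp_apply, ContinuousLinearMap.proj_apply]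

theorem jacM_id_add_apply {θ : (Fin 3 → ℝ) → (Fin 3 → ℝ)} {y : Fin 3 → ℝ}
    (hθ : DifferentiableAt ℝ θ y) (j s : Fin 3) :
    jacM (fun z => z + θ z) y j s = (Pi.single s 1 : Fin 3 → ℝ) j + pdF s (fun z => θ z j) y := by
  have hζ : HasFDerivAt (fun z => z + θ z) (ContinuousLinearMap.id ℝ _ + fderiv ℝ θ y) y :=
    (hasFDerivAt_id y).fun_add hθ.hasFDerivAt
  rw [jacM, Matrix.of_apply, pdF_apply_of_differentiableAt hζ.differentiableAt,
    pdF_apply_of_differentiableAt hθ, hζ.fderiv]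
  rfl

theorem hasFDerivAt_jacM_id_add_apply {θ : (Fin 3 → ℝ) → (Fin 3 → ℝ)} {x : Fin 3 → ℝ}
    (hθ : ContDiffAt ℝ 2 θ x) (j s : Fin 3) :
    HasFDerivAt (fun y => jacM (fun z => z + θ z) y j s)
      (fderiv ℝ (pdF s fun z => θ z j) x) x := by
  have hθj : ContDiffAt ℝ 2 (fun z => θ z j) x := contDiffAt_pi.1 hθ j
  have hpd : DifferentiableAt ℝ (pdF s fun z => θ z j) x :=
    ((hθj.fderiv_right (m := 1) (by norm_num)).clm_apply contDiffAt_const).differentiableAt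
      one_ne_zero
  refine (hpd.hasFDerivAt.const_add ((Pi.single s 1 : Fin 3 → ℝ) j)).congr_of_eventuallyEq ?_
  filter_upwards [hθ.eventually (by simp)] with y hy
  exact jacM_id_add_apply (hy.differentiableAt (by norm_num)) j s

theorem exists_forall_eq_fderiv_apply (D : ((Fin 3 → ℝ) → ℝ) → ((Fin 3 → ℝ) → ℝ))
    (hD : (∃ i : Fin 3, D = pdF i) ∨ D = radF ∨ ∃ j k : Fin 3, D = angF j k) :
    ∃ v : (Fin 3 → ℝ) → (Fin 3 → ℝ), ∀ f x, D f x = fderiv ℝ f x (v x) := by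
  rcases hD with ⟨i, rfl⟩ | rfl | ⟨j, k, rfl⟩
  · exact ⟨fun _ => Pi.single i 1, fun f x => rfl⟩
  · refine ⟨id, fun f x => ?_⟩
    simp only [radF, pdF, id, ← smul_eq_mul, ← map_smul, ← map_sum, ← pi_eq_sum_univ']
  · exact ⟨fun x => x j • Pi.single k 1 - x k • Pi.single j 1, fun f x => by simp [angF, pdF]⟩

theorem linearisation_of_pjac_ninv_general
    (U : Set (Fin 3 → ℝ)) (hU : IsOpen U) (α : ℝ)
    (θ : (Fin 3 → ℝ) → (Fin 3 → ℝ)) (hθ : ContDiffOn ℝ 2 θ U)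
    (hJpos : ∀ x ∈ U, 0 < (jacM (fun y => y + θ y) x).det)
    (D : ((Fin 3 → ℝ) → ℝ) → ((Fin 3 → ℝ) → ℝ))
    (hD : (∃ i : Fin 3, D = pdF i) ∨ D = radF ∨ ∃ j k : Fin 3, D = angF j k) :
    ∀ x ∈ U, ∀ k i : Fin 3,
      D (fun y => ((jacM (fun z => z + θ z) y).det) ^ (-1 / α)
            * ((jacM (fun z => z + θ z) y)⁻¹ k i)) x
        = -(((jacM (fun z => z + θ z) x).det) ^ (-1 / α) *
              ∑ j : Fin 3, ((jacM (fun z => z + θ z) x)⁻¹ k j) *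
                (∑ s : Fin 3, ((jacM (fun z => z + θ z) x)⁻¹ s j) *
                  pdF s (D (fun z => θ z i)) x))
          - (1 / α) * ((jacM (fun z => z + θ z) x).det) ^ (-1 / α) *
              ((jacM (fun z => z + θ z) x)⁻¹ k i) *
              (∑ r : Fin 3, ∑ s : Fin 3, ((jacM (fun z => z + θ z) x)⁻¹ s r) *
                pdF s (D (fun z => θ z r)) x)
          - (((jacM (fun z => z + θ z) x).det) ^ (-1 / α) *
              ∑ j : Fin 3, ((jacM (fun z => z + θ z) x)⁻¹ k j) *
                (∑ s : Fin 3,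
                  (((jacM (fun z => z + θ z) x)⁻¹ s i) * pdF s (D (fun z => θ z j)) x
                    - ((jacM (fun z => z + θ z) x)⁻¹ s j) * pdF s (D (fun z => θ z i)) x)))
          - ((((jacM (fun z => z + θ z) x).det) ^ (-1 / α) *
                ∑ j : Fin 3, ∑ s : Fin 3,
                  ((jacM (fun z => z + θ z) x)⁻¹ k j) *
                    ((jacM (fun z => z + θ z) x)⁻¹ s i) *
                    (D (pdF s (fun z => θ z j)) x - pdF s (D (fun z => θ z j)) x)
              + (1 / α) * (((jacM (fun z => z + θ z) x).det) ^ (-1 / α)) *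
                  ((jacM (fun z => z + θ z) x)⁻¹ k i) *
                  ∑ j : Fin 3, ∑ s : Fin 3,
                    ((jacM (fun z => z + θ z) x)⁻¹ s j) *
                      (D (pdF s (fun z => θ z j)) x - pdF s (D (fun z => θ z j)) x))) := by
  obtain ⟨v, hv⟩ := exists_forall_eq_fderiv_apply D hD
  intro x hx k i
  have hM := hasFDerivAt_jacM_id_add_apply (hθ.contDiffAt (hU.mem_nhds hx))
  rw [hv, fderiv_det_rpow_mul_inv_apply hM (hJpos x hx) (-1 / α) k i (v x)]
  refine Eq.trans ?_ (linearisation_rhs_telescope (jacM (fun z => z + θ z) x)⁻¹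
    (of fun j s => D (pdF s fun z => θ z j) x) (of fun i s => pdF s (D fun z => θ z i) x)
    _ (1 / α) k i).symm
  simp only [hv]
  ring

/-- **Linearisation of `𝒥^{-1/α} 𝒜`.**  For `ζ = id + θ` with invertible Jacobian and any
first-order operator `𝒟 ∈ {∂_i, Λ, ∂̸_jk}`,
`𝒟(𝒥^{-1/α}𝒜^k_i) = −𝒥^{-1/α}𝒜^k_j [∇_ζ(𝒟θ)]^i_j − (1/α)𝒥^{-1/α}𝒜^k_i div_ζ(𝒟θ)
 − 𝒥^{-1/α}𝒜^k_j [Curl_ζ(𝒟θ)]^j_i − (𝒥^{-1/α}𝒜^k_j 𝒜^s_i [𝒟,∂_s]θ^j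
 + (1/α)𝒥^{-1/α}𝒜^k_i 𝒜^s_j [𝒟,∂_s]θ^j)`. -/
theorem linearisation_of_pjac_ninv
    (U : Set (Fin 3 → ℝ)) (hU : IsOpen U) (α : ℝ) (hα : 0 < α)
    (θ : (Fin 3 → ℝ) → (Fin 3 → ℝ)) (hθ : ContDiffOn ℝ 2 θ U)
    (hinv : ∀ x ∈ U, IsUnit (jacM (fun y => y + θ y) x))
    (hJpos : ∀ x ∈ U, 0 < (jacM (fun y => y + θ y) x).det)
    (D : ((Fin 3 → ℝ) → ℝ) → ((Fin 3 → ℝ) → ℝ))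
    (hD : (∃ i : Fin 3, D = pdF i) ∨ D = radF ∨ ∃ j k : Fin 3, D = angF j k) :
    ∀ x ∈ U, ∀ k i : Fin 3,
      D (fun y => ((jacM (fun z => z + θ z) y).det) ^ (-1 / α)
            * ((jacM (fun z => z + θ z) y)⁻¹ k i)) x
        = -(((jacM (fun z => z + θ z) x).det) ^ (-1 / α) *
              ∑ j : Fin 3, ((jacM (fun z => z + θ z) x)⁻¹ k j) *
                (∑ s : Fin 3, ((jacM (fun z => z + θ z) x)⁻¹ s j) *
                  pdF s (D (fun z => θ z i)) x))
          - (1 / α) * ((jacM (fun z => z + θ z) x).det) ^ (-1 / α) *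
              ((jacM (fun z => z + θ z) x)⁻¹ k i) *
              (∑ r : Fin 3, ∑ s : Fin 3, ((jacM (fun z => z + θ z) x)⁻¹ s r) *
                pdF s (D (fun z => θ z r)) x)
          - (((jacM (fun z => z + θ z) x).det) ^ (-1 / α) *
              ∑ j : Fin 3, ((jacM (fun z => z + θ z) x)⁻¹ k j) *
                (∑ s : Fin 3,
                  (((jacM (fun z => z + θ z) x)⁻¹ s i) * pdF s (D (fun z => θ z j)) x
                    - ((jacM (fun z => z + θ z) x)⁻¹ s j) * pdF s (D (fun z => θ z i)) x)))
          - ((((jacM (fun z => z + θ z) x).det) ^ (-1 / α) *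
                ∑ j : Fin 3, ∑ s : Fin 3,
                  ((jacM (fun z => z + θ z) x)⁻¹ k j) *
                    ((jacM (fun z => z + θ z) x)⁻¹ s i) *
                    (D (pdF s (fun z => θ z j)) x - pdF s (D (fun z => θ z j)) x)
              + (1 / α) * (((jacM (fun z => z + θ z) x).det) ^ (-1 / α)) *
                  ((jacM (fun z => z + θ z) x)⁻¹ k i) *
                  ∑ j : Fin 3, ∑ s : Fin 3,
                    ((jacM (fun z => z + θ z) x)⁻¹ s j) *
                      (D (pdF s (fun z => θ z j)) x - pdF s (D (fun z => θ z j)) x))) :=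
  linearisation_of_pjac_ninv_general U hU α θ hθ hJpos D hD
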